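/- The conditional probability that Y_i=1 given Z_{i-1}=m and the constraint C={Z_n=n_1} satisfies P(Y_i=1 | Z_{i-1}=m, C) = π_i·B_i(m+1) / B_{i-1}(m), provided P(Z_{i-1}=m, C) > 0. -/

import Mathlib

open scoped Classical
open Finset

/-- Product Bernoulli weight of a configuration: individual `i+1` (1-based) has
probability `π (i+1)` of being a case (`true`). -/
noncomputable def wgt (n : ℕ) (π : ℕ → ℝ) (y : Fin n → Bool) : ℝ :=
  ∏ i : Fin n, if y i then π (i.1 + 1) else 1 - π (i.1 + 1)

/-- Probability of an event under the product Bernoulli law. -/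
noncomputable def prb (n : ℕ) (π : ℕ → ℝ) (E : (Fin n → Bool) → Prop) : ℝ :=
  ∑ y : Fin n → Bool, if E y then wgt n π y else 0

/-- Partial sum `Z_j = Y_1 + ... + Y_j`. -/
def zsum (n : ℕ) (y : Fin n → Bool) (j : ℕ) : ℤ :=
  ((Finset.univ.filter (fun i : Fin n => i.1 < j ∧ y i)).card : ℤ)

/-- Tail sum `Y_{i+1} + ... + Y_n`. -/
def tcnt (n : ℕ) (y : Fin n → Bool) (i : ℕ) : ℤ :=
  ((Finset.univ.filter (fun k : Fin n => i ≤ k.1 ∧ y k)).card : ℤ)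

/-- Forward quantity `F_i(m) = P(Z_i = m)`. -/
noncomputable def fwd (n : ℕ) (π : ℕ → ℝ) (i : ℕ) (m : ℤ) : ℝ :=
  prb n π (fun y => zsum n y i = m)

/-- Backward quantity `B_i(m) = P(Y_{i+1} + ... + Y_n = n1 - m)`. -/
noncomputable def bwd (n : ℕ) (π : ℕ → ℝ) (n1 : ℤ) (i : ℕ) (m : ℤ) : ℝ :=
  prb n π (fun y => tcnt n y i = n1 - m)

/-!
Under the product weight the coordinates split into a head `Y_1, …, Y_{i-1}` and a tail
`Y_i, …, Y_n`, and an event about the head is independent of an event about the tail: the weighted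
sum of a product `f x * g x` factors as soon as `f` and `g` depend on complementary blocks of
coordinates and the weights of each coordinate sum to `1`.
Since `Z_n = Z_{i-1} + (Y_i + ⋯ + Y_n)`, the event `{Z_{i-1} = m} ∩ C` therefore has weight
`F_{i-1}(m) B_{i-1}(m)`, and `{Y_i = 1} ∩ {Z_{i-1} = m} ∩ C` has weight `F_{i-1}(m) π_i B_i(m+1)`.
The forward factor `F_{i-1}(m)` cancels in the quotient; it is nonzero because the denominator is.
-/

section ProductWeight

variable {ι : Type*} [Fintype ι] [DecidableEq ι] {α : ι → Type*} [∀ i, Fintype (α i)]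
  {R : Type*} [CommSemiring R]

theorem sum_mul_mul_prod_eq_of_dependsOn (w : ∀ i, α i → R) (hw : ∀ i, ∑ a, w i a = 1)
    (s : Set ι) [DecidablePred (· ∈ s)] {f g : (∀ i, α i) → R}
    (hf : DependsOn f s) (hg : DependsOn g sᶜ) :
    ∑ x, f x * g x * ∏ i, w i (x i) =
      (∑ x, f x * ∏ i, w i (x i)) * ∑ x, g x * ∏ i, w i (x i) := by
  set e := (Equiv.piEquivPiSubtypeProd (· ∈ s) α).symm
  set W₁ : (∀ i : {i // i ∈ s}, α i) → R := fun u => ∏ i, w i.1 (u i)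
  set W₂ : (∀ i : {i // i ∉ s}, α i) → R := fun v => ∏ i, w i.1 (v i)
  have hW : ∀ u v, ∏ i, w i (e (u, v) i) = W₁ u * W₂ v := by
    intro u v
    rw [← Fintype.prod_subtype_mul_prod_subtype (· ∈ s)]
    congr 1 <;> refine prod_congr rfl fun i _ => ?_ <;>
      simp [e, Equiv.piEquivPiSubtypeProd_symm_apply, i.2]
  have hW₁ : ∑ u, W₁ u = 1 := by simp only [W₁, ← Fintype.prod_sum, hw, prod_const_one]
  have hW₂ : ∑ v, W₂ v = 1 := by simp only [W₂, ← Fintype.prod_sum, hw, prod_const_one]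
  -- Marginals rather than values at a base point, so that no `Nonempty (α i)` is needed.
  set F := fun u => ∑ v, f (e (u, v)) * W₂ v
  set G := fun v => ∑ u, g (e (u, v)) * W₁ u
  have hF : ∀ u v, f (e (u, v)) = F u := by
    intro u v
    have : ∀ v', f (e (u, v')) = f (e (u, v)) := fun v' =>
      hf fun i hi => by simp [e, Equiv.piEquivPiSubtypeProd_symm_apply, hi]
    simp only [F, this, ← mul_sum, hW₂, mul_one]
  have hG : ∀ u v, g (e (u, v)) = G v := by
    intro u v
    have : ∀ u', g (e (u', v)) = g (e (u, v)) := fun u' =>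
      hg fun i hi => by simp [e, Equiv.piEquivPiSubtypeProd_symm_apply, show i ∉ s from hi]
    simp only [G, this, ← mul_sum, hW₁, mul_one]
  simp only [← e.sum_comp, Fintype.sum_prod_type, hW, hF, hG]
  have hF₁ : ∑ u, ∑ v, F u * (W₁ u * W₂ v) = ∑ u, F u * W₁ u := by
    simp only [← mul_assoc, ← mul_sum, hW₂, mul_one]
  have hG₂ : ∑ u, ∑ v, G v * (W₁ u * W₂ v) = ∑ v, G v * W₂ v := by
    rw [sum_comm]
    simp only [mul_left_comm _ (W₁ _), ← sum_mul, hW₁, one_mul]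
  rw [hF₁, hG₂, sum_mul_sum]
  exact sum_congr rfl fun u _ => sum_congr rfl fun v _ => by ring

theorem sum_apply_mul_prod_eq (w : ∀ i, α i → R) (hw : ∀ i, ∑ a, w i a = 1) (k : ι)
    (f : α k → R) : ∑ x : ∀ i, α i, f (x k) * ∏ i, w i (x i) = ∑ a, f a * w k a := by
  set w' := Function.update w k fun a => f a * w k a
  have hw'_ne : ∀ i ∈ ({k}ᶜ : Finset ι), w' i = w i := fun i hi =>
    Function.update_of_ne (notMem_singleton.mp (mem_compl.mp hi)) _ _
  have hw' : ∀ x : ∀ i, α i, f (x k) * ∏ i, w i (x i) = ∏ i, w' i (x i) := by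
    intro x
    rw [Fintype.prod_eq_mul_prod_compl k, Fintype.prod_eq_mul_prod_compl k, ← mul_assoc]
    congr 1
    · simp [w']
    · exact prod_congr rfl fun i hi => by rw [hw'_ne i hi]
  simp only [hw', ← Fintype.prod_sum]
  rw [Fintype.prod_eq_mul_prod_compl k, prod_eq_one fun i hi => by rw [hw'_ne i hi, hw], mul_one]
  simp [w']

end ProductWeight

section Bernoulli

variable {n : ℕ} (π : ℕ → ℝ)

noncomputable def bernWeight (k : Fin n) (b : Bool) : ℝ :=
  if b then π (k.1 + 1) else 1 - π (k.1 + 1)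

lemma sum_bernWeight (k : Fin n) : ∑ b, bernWeight π k b = 1 := by
  simp [bernWeight]

lemma prb_eq_sum_ite_mul (E : (Fin n → Bool) → Prop) [DecidablePred E] :
    prb n π E = ∑ y, (if E y then 1 else 0) * ∏ k, bernWeight π k (y k) := by
  refine sum_congr rfl fun y _ => ?_
  split_ifs <;> simp [wgt, bernWeight]

theorem prb_and_of_dependsOn {A B : (Fin n → Bool) → Prop} (t : ℕ)
    (hA : DependsOn A {k | k.1 < t}) (hB : DependsOn B {k | t ≤ k.1}) :
    prb n π (fun y => A y ∧ B y) = prb n π A * prb n π B := by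
  have hind : ∀ y, (if A y ∧ B y then (1 : ℝ) else 0) =
      (if A y then 1 else 0) * (if B y then 1 else 0) :=
    fun y => by rw [ite_zero_mul_ite_zero, one_mul]
  simp only [prb_eq_sum_ite_mul, hind]
  refine sum_mul_mul_prod_eq_of_dependsOn _ (sum_bernWeight π) {k | k.1 < t}
    (fun x y h => by simp only [hA h])
    (fun x y h => by simp only [hB fun k (hk : t ≤ k.1) => h k (not_lt.mpr hk)])

theorem prb_apply_eq_true (k : Fin n) : prb n π (fun y => y k = true) = π (k.1 + 1) := by
  rw [prb_eq_sum_ite_mul,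
    sum_apply_mul_prod_eq _ (sum_bernWeight π) k (fun b => if b = true then 1 else 0)]
  simp [bernWeight]

end Bernoulli

section Counts

variable {n : ℕ}

lemma zsum_eq_sum (y : Fin n → Bool) (j : ℕ) :
    zsum n y j = ∑ k, if k.1 < j ∧ y k then 1 else 0 := by
  simp only [zsum, card_filter, Nat.cast_sum, Nat.cast_ite, Nat.cast_one, Nat.cast_zero]

lemma tcnt_eq_sum (y : Fin n → Bool) (j : ℕ) :
    tcnt n y j = ∑ k, if j ≤ k.1 ∧ y k then 1 else 0 := by
  simp only [tcnt, card_filter, Nat.cast_sum, Nat.cast_ite, Nat.cast_one, Nat.cast_zero]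

lemma zsum_add_tcnt (y : Fin n → Bool) (j : ℕ) : zsum n y j + tcnt n y j = zsum n y n := by
  simp only [zsum_eq_sum, tcnt_eq_sum, ← sum_add_distrib]
  refine sum_congr rfl fun k _ => ?_
  have := k.2
  split_ifs <;> grind

lemma tcnt_eq_tcnt_succ_add_one (y : Fin n → Bool) (k : Fin n) (hk : y k = true) :
    tcnt n y k = tcnt n y (k + 1) + 1 := by
  have hone : (1 : ℤ) = ∑ j : Fin n, if j = k then 1 else 0 := by simp
  rw [tcnt_eq_sum, tcnt_eq_sum, hone, ← sum_add_distrib]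
  refine sum_congr rfl fun j _ => ?_
  by_cases hj : j = k
  · simp [hj, hk]
  · have := Fin.val_ne_of_ne hj
    split_ifs <;> grind

lemma dependsOn_zsum (j : ℕ) : DependsOn (fun y : Fin n → Bool => zsum n y j) {k | k.1 < j} :=
  fun x y h => by
    simp only [zsum_eq_sum]
    exact sum_congr rfl fun k _ => if_congr (and_congr_right fun hk => by rw [h k hk]) rfl rfl

lemma dependsOn_tcnt (j : ℕ) : DependsOn (fun y : Fin n → Bool => tcnt n y j) {k | j ≤ k.1} :=
  fun x y h => by
    simp only [tcnt_eq_sum]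
    exact sum_congr rfl fun k _ => if_congr (and_congr_right fun hk => by rw [h k hk]) rfl rfl

end Counts

section Conditioning

variable {n : ℕ} (π : ℕ → ℝ) (m n1 : ℤ)

theorem prb_zsum_eq_and_zsum_eq (j : ℕ) :
    prb n π (fun y => zsum n y j = m ∧ zsum n y n = n1) = fwd n π j m * bwd n π n1 j m := by
  have hsplit : (fun y => zsum n y j = m ∧ zsum n y n = n1) =
      fun y => zsum n y j = m ∧ tcnt n y j = n1 - m := by
    ext y
    have := zsum_add_tcnt y j
    constructor <;> rintro ⟨h₁, h₂⟩ <;> exact ⟨h₁, by omega⟩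
  rw [hsplit, prb_and_of_dependsOn π j (fun x y h => congrArg (· = m) (dependsOn_zsum j h))
    (fun x y h => congrArg (· = n1 - m) (dependsOn_tcnt j h))]
  rfl

theorem prb_apply_and_zsum_eq_and_zsum_eq (k : Fin n) :
    prb n π (fun y => y k = true ∧ zsum n y k = m ∧ zsum n y n = n1) =
      fwd n π k m * (π (k + 1) * bwd n π n1 (k + 1) (m + 1)) := by
  have hsplit : (fun y => y k = true ∧ zsum n y k = m ∧ zsum n y n = n1) =
      fun y => zsum n y k = m ∧ (y k = true ∧ tcnt n y (k + 1) = n1 - (m + 1)) := by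
    ext y
    have := zsum_add_tcnt y k
    constructor
    · rintro ⟨hk, h₁, h₂⟩
      have := tcnt_eq_tcnt_succ_add_one y k hk
      exact ⟨h₁, hk, by omega⟩
    · rintro ⟨h₁, hk, h₂⟩
      have := tcnt_eq_tcnt_succ_add_one y k hk
      exact ⟨hk, h₁, by omega⟩
  have hcase : DependsOn (fun y : Fin n → Bool => y k = true) {k} :=
    fun x y h => congrArg (· = true) (h k rfl)
  have htail : DependsOn (fun y => tcnt n y (k + 1) = n1 - (m + 1)) {j | k.1 + 1 ≤ j.1} :=
    fun x y h => congrArg (· = n1 - (m + 1)) (dependsOn_tcnt (k.1 + 1) h)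
  rw [hsplit, prb_and_of_dependsOn π k (fun x y h => congrArg (· = m) (dependsOn_zsum k h))
      fun x y h => congrArg₂ And
        (hcase.mono (t := {j | k.1 ≤ j.1}) (Set.singleton_subset_iff.mpr (le_refl k.1)) h)
        (htail.mono (t := {j | k.1 ≤ j.1}) (fun j hj => Nat.le_of_succ_le hj) h),
    prb_and_of_dependsOn π (k + 1)
      (hcase.mono (Set.singleton_subset_iff.mpr k.1.lt_succ_self)) htail,
    prb_apply_eq_true]
  rfl

end Conditioning

/-- Backward sampling probability: the conditional probability that individual
`i` is a case given the number of cases among the first `i-1` and the total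
constraint. -/
theorem sampling_probability (n : ℕ) (π : ℕ → ℝ) (n1 : ℤ)
    (i : ℕ) (hi1 : 1 ≤ i) (hi2 : i ≤ n) (m : ℤ)
    (hpos : 0 < prb n π (fun y => zsum n y (i - 1) = m ∧ zsum n y n = n1)) :
    prb n π (fun y => y ⟨i - 1, by omega⟩ = true ∧ zsum n y (i - 1) = m ∧ zsum n y n = n1) /
      prb n π (fun y => zsum n y (i - 1) = m ∧ zsum n y n = n1)
      = π i * bwd n π n1 i (m + 1) / bwd n π n1 (i - 1) m := by
  have hcase := prb_apply_and_zsum_eq_and_zsum_eq π m n1 (⟨i - 1, by omega⟩ : Fin n)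
  simp only [Nat.sub_add_cancel hi1] at hcase
  rw [prb_zsum_eq_and_zsum_eq] at hpos ⊢
  rw [hcase, mul_div_mul_left _ _ (left_ne_zero_of_mul hpos.ne')]
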